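/- arXiv:2511.02432 — 6 statements merged into one kernel-verified Lean document; each statement's English description precedes it below -/
import Mathlib

section
/- Main duality theorem. Let n ≥ 1, let a : Fin n → ℝ → ℝ be n-times continuously differentiable on an open set I ⊆ ℝ, and let p_1, …, p_n : ℝ → ℝ satisfy, for all j and all x ∈ I, (d/dx)^n a_j(x) = ∑_{i=1}^{n} p_i(x) · (d/dx)^{n−i} a_j(x). Then for every x ∈ I with det W(x) ≠ 0, the characteristic polynomial of the Maurer–Cartan matrix R(x) = W'(x)·(W(x))⁻¹ is X^n − ∑_{i=1}^{n} p_i(x) · X^{n−i}; equivalently, for each 1 ≤ i ≤ n, the coefficient of X^{n−i} in the characteristic polynomial of R(x) equals −p_i(x), so the coefficients of the characteristic polynomial of R recover exactly the coefficients of the original differential equation. -/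
open Matrix Polynomial

/-- The Wronskian matrix of a family of functions `a : Fin n → ℝ → ℝ`:
entry `(i, j)` is the `i`-th iterated derivative of `a j` at `x`. -/
noncomputable def wronskianMatrix (n : ℕ) (a : Fin n → ℝ → ℝ) (x : ℝ) :
    Matrix (Fin n) (Fin n) ℝ :=
  Matrix.of fun i j => iteratedDeriv (i : ℕ) (a j) x

/-- The entrywise derivative of the Wronskian matrix. -/
noncomputable def wronskianMatrixDeriv (n : ℕ) (a : Fin n → ℝ → ℝ) (x : ℝ) :
    Matrix (Fin n) (Fin n) ℝ :=
  Matrix.of fun i j => deriv (fun t => wronskianMatrix n a t i j) x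

/-- The companion matrix of `X^n - ∑ c j * X^j` (last row carries the coefficients). -/
noncomputable def compMat (n : ℕ) (c : Fin n → ℝ) : Matrix (Fin n) (Fin n) ℝ :=
  Matrix.of fun i j => if (i : ℕ) + 1 = n then c j else if (j : ℕ) = (i : ℕ) + 1 then 1 else 0

lemma compMat_charpoly (m : ℕ) (c : Fin (m + 1) → ℝ) :
    (compMat (m + 1) c).charpoly = X ^ (m + 1) - ∑ j : Fin (m + 1), C (c j) * X ^ (j : ℕ) := by
  set M := compMat (m + 1) c with hM
  set q : Polynomial ℝ := X ^ (m + 1) - ∑ j : Fin (m + 1), C (c j) * X ^ (j : ℕ) with hq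
  set A := charmatrix M with hA
  -- column operation: add X^j times column j to column 0
  have h1 : ((X : Polynomial ℝ) ^ ((0 : Fin (m+1)) : ℕ)) • A.det =
      (A.updateCol 0 (fun k => ∑ i : Fin (m+1), ((X : Polynomial ℝ) ^ (i : ℕ)) • A k i)).det :=
    (det_updateCol_sum A 0 (fun i => X ^ (i : ℕ))).symm
  simp only [Fin.val_zero, pow_zero, one_smul] at h1
  have hcol : (fun k => ∑ i : Fin (m+1), ((X : Polynomial ℝ) ^ (i : ℕ)) • A k i) =
      (fun k : Fin (m+1) => if (k : ℕ) = m then q else 0) := by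
    funext k
    have hsplit : ∀ i : Fin (m+1), ((X : Polynomial ℝ) ^ (i : ℕ)) • A k i =
        (if k = i then (X : Polynomial ℝ) ^ ((i : ℕ) + 1) else 0)
          - (X : Polynomial ℝ) ^ (i : ℕ) * C (M k i) := by
      intro i
      rw [hA, charmatrix_apply, smul_eq_mul, mul_sub, diagonal_apply]
      congr 1
      split
      · next h => subst h; rw [pow_succ]
      · simp
    rw [Finset.sum_congr rfl fun i _ => hsplit i, Finset.sum_sub_distrib,
      Finset.sum_ite_eq Finset.univ k (fun i => (X : Polynomial ℝ) ^ ((i : ℕ) + 1))]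
    simp only [Finset.mem_univ, if_true]
    by_cases hk : (k : ℕ) = m
    · rw [if_pos hk, hq, hk]
      have : ∀ i : Fin (m+1), M k i = c i := by
        intro i; rw [hM]; simp [compMat, hk]
      simp only [this]
      congr 1
      exact Finset.sum_congr rfl fun i _ => by ring
    · rw [if_neg hk]
      have hk1 : (k : ℕ) + 1 < m + 1 := by have := k.isLt; omega
      have hMk : ∀ i : Fin (m+1), M k i = if (i : ℕ) = (k : ℕ) + 1 then 1 else 0 := by
        intro i; rw [hM]; simp [compMat, hk]
      simp only [hMk]
      have hval : ∀ i : Fin (m+1),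
          (if (i:ℕ) = (k:ℕ)+1 then (1:ℝ) else 0) = (if i = ⟨(k:ℕ)+1, hk1⟩ then (1:ℝ) else 0) := by
        intro i
        congr 1
        simp [Fin.ext_iff]
      rw [Finset.sum_congr rfl fun i _ => by rw [hval i]]
      rw [sub_eq_zero]
      simp [apply_ite C, Finset.sum_ite_eq' Finset.univ]
  rw [hcol] at h1
  set N := A.updateCol 0 (fun k : Fin (m+1) => if (k : ℕ) = m then q else 0) with hN
  -- compute det N by expansion along column 0
  have hdetN : N.det = q := by
    rw [det_succ_column_zero]
    rw [Finset.sum_eq_single (Fin.last m)]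
    · have hN0 : N (Fin.last m) 0 = q := by
        rw [hN, updateCol_apply, if_pos rfl]
        simp [Fin.last]
      rw [hN0]
      have hsubm : N.submatrix (Fin.last m).succAbove Fin.succ =
          Matrix.of (fun i j : Fin m =>
            if i = j then (-1 : Polynomial ℝ) else if (i : ℕ) = (j : ℕ) + 1 then X else 0) := by
        refine Matrix.ext fun i j => ?_
        rw [submatrix_apply, Fin.succAbove_last]
        have hne : (j.succ : Fin (m+1)) ≠ 0 := Fin.succ_ne_zero j
        rw [hN, updateCol_apply, if_neg hne, hA, charmatrix_apply, diagonal_apply]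
        have hrow : ¬ (((i.castSucc : Fin (m+1)) : ℕ) + 1 = m + 1) := by
          have := i.isLt; simp only [Fin.coe_castSucc]; omega
        have hMentry : M i.castSucc j.succ =
            if ((j.succ : Fin (m+1)) : ℕ) = ((i.castSucc : Fin (m+1)) : ℕ) + 1 then 1 else 0 := by
          rw [hM]; simp only [compMat, of_apply]; rw [if_neg hrow]
        rw [hMentry]
        by_cases h1 : i = j
        · subst h1
          have hc1 : ¬ ((i.castSucc : Fin (m+1)) = i.succ) := by
            simp [Fin.ext_iff]
          rw [if_neg hc1, if_pos (by simp), of_apply, if_pos rfl]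
          simp
        · have hv : ¬ ((i : ℕ) = (j : ℕ)) := fun h => h1 (Fin.ext h)
          by_cases h2 : (i : ℕ) = (j : ℕ) + 1
          · rw [if_pos (by simp [Fin.ext_iff, h2]), if_neg (by simp [Fin.ext_iff]; omega),
              of_apply, if_neg h1, if_pos h2]
            simp
          · rw [if_neg (by simp [Fin.ext_iff]; omega), if_neg (by simp [Fin.ext_iff]; omega),
              of_apply, if_neg h1, if_neg h2]
            simp
      have hsub : (N.submatrix (Fin.last m).succAbove Fin.succ).det = (-1 : Polynomial ℝ) ^ m := by
        rw [hsubm, Matrix.det_of_lowerTriangular]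
        · simp
        · intro i j hij
          have h2 : i < j := hij
          have h2' : (i : ℕ) < (j : ℕ) := h2
          have hne1 : ¬ i = j := by intro h; subst h; omega
          have hne2 : ¬ (i : ℕ) = (j : ℕ) + 1 := by omega
          simp [hne1, hne2]
      rw [hsub, Fin.val_last, mul_comm ((-1 : Polynomial ℝ) ^ m) q, mul_assoc, ← pow_add,
        Even.neg_one_pow ⟨m, rfl⟩, mul_one]
    · intro i _ hi
      have : N i 0 = 0 := by
        rw [hN, updateCol_apply, if_pos rfl, if_neg]
        intro h
        exact hi (Fin.ext (by simpa [Fin.last] using h))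
      rw [this, mul_zero, zero_mul]
    · intro h; exact absurd (Finset.mem_univ _) h
  have hfin : M.charpoly = A.det := rfl
  rw [hfin, h1, hdetN]

/-- Main duality theorem: the characteristic polynomial of the Maurer–Cartan matrix
`R = W' * W⁻¹` is `X^n - ∑ p_i • X^(n-i)`; equivalently its coefficient of `X^(n-i)`
is `-p_i` (here `p i` corresponds to `p_{i+1}` in one-based notation). -/
theorem charpoly_maurerCartan (n : ℕ) (hn : 1 ≤ n)
    (I : Set ℝ) (hI : IsOpen I)
    (a : Fin n → ℝ → ℝ) (ha : ∀ j, ContDiffOn ℝ (n : ℕ∞) (a j) I)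
    (p : Fin n → ℝ → ℝ)
    (hODE : ∀ j, ∀ x ∈ I,
      iteratedDeriv n (a j) x = ∑ i : Fin n, p i x * iteratedDeriv (n - 1 - (i : ℕ)) (a j) x)
    (x : ℝ) (hx : x ∈ I) (hdet : (wronskianMatrix n a x).det ≠ 0) :
    (wronskianMatrixDeriv n a x * (wronskianMatrix n a x)⁻¹).charpoly =
        X ^ n - ∑ i : Fin n, C (p i x) * X ^ (n - 1 - (i : ℕ)) ∧
      ∀ i : Fin n,
        (wronskianMatrixDeriv n a x * (wronskianMatrix n a x)⁻¹).charpoly.coeff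
            (n - 1 - (i : ℕ)) = -(p i x) := by
  -- Step 1: W' = companion * W
  have hIsU : IsUnit (wronskianMatrix n a x).det := isUnit_iff_ne_zero.mpr hdet
  set cvec : Fin n → ℝ := fun j => p (Fin.rev j) x with hcvec
  have hWd : wronskianMatrixDeriv n a x = compMat n cvec * wronskianMatrix n a x := by
    refine Matrix.ext fun i j => ?_
    have hL : wronskianMatrixDeriv n a x i j = iteratedDeriv ((i : ℕ) + 1) (a j) x := by
      rw [wronskianMatrixDeriv, of_apply, iteratedDeriv_succ]
      rfl
    rw [hL, mul_apply]
    by_cases h : (i : ℕ) + 1 = n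
    · have hR : ∀ l : Fin n, compMat n cvec i l * wronskianMatrix n a x l j =
          p (Fin.rev l) x * iteratedDeriv (l : ℕ) (a j) x := by
        intro l
        rw [compMat, wronskianMatrix, of_apply, of_apply, if_pos h]
      rw [Finset.sum_congr rfl fun l _ => hR l, h, hODE j x hx]
      refine Fintype.sum_equiv (Fin.revPerm) _ _ fun k => ?_
      simp only [Fin.revPerm_apply, Fin.rev_rev]
      congr 2
      rw [Fin.val_rev]
      omega
    · have hlt : (i : ℕ) + 1 < n := lt_of_le_of_ne i.isLt h
      have hR : ∀ l : Fin n, compMat n cvec i l * wronskianMatrix n a x l j =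
          if l = ⟨(i : ℕ) + 1, hlt⟩ then iteratedDeriv (l : ℕ) (a j) x else 0 := by
        intro l
        rw [compMat, wronskianMatrix, of_apply, of_apply, if_neg h]
        by_cases hl : l = ⟨(i : ℕ) + 1, hlt⟩
        · rw [if_pos (by simp [hl]), if_pos hl, one_mul]
        · rw [if_neg (by simpa [Fin.ext_iff] using hl), if_neg hl, zero_mul]
      rw [Finset.sum_congr rfl fun l _ => hR l, Finset.sum_ite_eq' Finset.univ,
        if_pos (Finset.mem_univ _)]
  have hR : wronskianMatrixDeriv n a x * (wronskianMatrix n a x)⁻¹ = compMat n cvec := by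
    rw [hWd, Matrix.mul_assoc, Matrix.mul_nonsing_inv _ hIsU, Matrix.mul_one]
  obtain ⟨m, rfl⟩ : ∃ m, n = m + 1 := ⟨n - 1, by omega⟩
  have hcp : (wronskianMatrixDeriv (m+1) a x * (wronskianMatrix (m+1) a x)⁻¹).charpoly =
      X ^ (m + 1) - ∑ i : Fin (m+1), C (p i x) * X ^ (m + 1 - 1 - (i : ℕ)) := by
    rw [hR, compMat_charpoly]
    congr 1
    refine Fintype.sum_equiv (Fin.revPerm) _ _ fun k => ?_
    simp only [Fin.revPerm_apply, hcvec, Fin.rev_rev]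
    congr 2
    rw [Fin.val_rev]
    omega
  refine ⟨hcp, fun i => ?_⟩
  rw [hcp, coeff_sub, coeff_X_pow, if_neg (by have := i.isLt; omega), finset_sum_coeff]
  rw [Finset.sum_eq_single i]
  · rw [coeff_C_mul, coeff_X_pow, if_pos rfl, mul_one, zero_sub]
  · intro b _ hb
    rw [coeff_C_mul, coeff_X_pow, if_neg, mul_zero]
    have hb' : (b : ℕ) ≠ (i : ℕ) := fun h => hb (Fin.ext h)
    have := b.isLt; have := i.isLt
    omega
  · intro h; exact absurd (Finset.mem_univ _) h
end

section
/- Cayley–Hamilton form of the duality. Let n ≥ 1, let a : Fin n → ℝ → ℝ be n-times continuously differentiable on an open set I ⊆ ℝ, and let p_1, …, p_n : ℝ → ℝ satisfy, for all j and all x ∈ I, (d/dx)^n a_j(x) = ∑_{i=1}^{n} p_i(x) · (d/dx)^{n−i} a_j(x). Then for every x ∈ I with det W(x) ≠ 0, the Maurer–Cartan matrix R(x) = W'(x)·(W(x))⁻¹ satisfies the matrix identity R(x)^n = ∑_{i=1}^{n} p_i(x) • R(x)^{n−i} (where R(x)^0 is the identity matrix). -/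
open Matrix

/-- Companion-type matrix with last row `c` and shifted identity above. -/
noncomputable def companionA {n : ℕ} (c : Fin n → ℝ) : Matrix (Fin n) (Fin n) ℝ :=
  Matrix.of fun i j =>
    if (i : ℕ) + 1 = n then c j else if (j : ℕ) = (i : ℕ) + 1 then 1 else 0

lemma companionA_mul_row_lt {n : ℕ} (c : Fin n → ℝ) (M : Matrix (Fin n) (Fin n) ℝ)
    (i : Fin n) (h : (i : ℕ) + 1 < n) :
    (companionA c * M) i = M ⟨(i : ℕ) + 1, h⟩ := by
  funext j
  rw [mul_apply, Finset.sum_eq_single (⟨(i : ℕ) + 1, h⟩ : Fin n)]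
  · simp [companionA, Nat.ne_of_lt h]
  · intro b _ hb
    have hb' : (b : ℕ) ≠ (i : ℕ) + 1 := by
      simpa [Fin.ext_iff] using hb
    simp [companionA, Nat.ne_of_lt h, hb']
  · simp

lemma companionA_mul_row_last {n : ℕ} (c : Fin n → ℝ) (M : Matrix (Fin n) (Fin n) ℝ)
    (i : Fin n) (h : (i : ℕ) + 1 = n) (j : Fin n) :
    (companionA c * M) i j = ∑ k, c k * M k j := by
  simp [mul_apply, companionA, h]

lemma companionA_pow_row_zero {n : ℕ} (c : Fin n → ℝ) (h0 : 0 < n) :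
    ∀ (k : ℕ) (hk : k < n) (M : Matrix (Fin n) (Fin n) ℝ),
      ((companionA c) ^ k * M) ⟨0, h0⟩ = M ⟨k, hk⟩ := by
  intro k
  induction k with
  | zero =>
    intro hk M
    simp
  | succ k ih =>
    intro hk M
    have hk' : k < n := Nat.lt_of_succ_lt hk
    rw [pow_succ, mul_assoc, ih hk' (companionA c * M),
      companionA_mul_row_lt c M ⟨k, hk'⟩ hk]

lemma companionA_cayleyHamilton {n : ℕ} (hn : 1 ≤ n) (c : Fin n → ℝ) :
    (companionA c) ^ n = ∑ j : Fin n, c j • (companionA c) ^ (j : ℕ) := by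
  set A := companionA c with hA
  have h0 : 0 < n := hn
  have hpow : ∀ (i : Fin n) (m : ℕ), (A ^ m) i = (A ^ m * A ^ (i : ℕ)) ⟨0, h0⟩ := by
    intro i m
    rw [← pow_mul_comm, companionA_pow_row_zero c h0 (i : ℕ) i.isLt, Fin.eta]
  have hn1 : n - 1 < n := Nat.sub_lt hn Nat.one_pos
  have hn1' : (n - 1) + 1 = n := Nat.succ_pred_eq_of_pos hn
  have hlast : ∀ M : Matrix (Fin n) (Fin n) ℝ, ∀ j,
      (A ^ n * M) ⟨0, h0⟩ j = ∑ k, c k * M k j := by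
    intro M j
    have hsplit : A ^ n = A ^ (n - 1) * A := by rw [← pow_succ, hn1']
    rw [hsplit, mul_assoc, companionA_pow_row_zero c h0 (n - 1) hn1 (A * M),
      companionA_mul_row_last c M ⟨n - 1, hn1⟩ hn1' j]
  ext i j
  have h1 : (A ^ n) i j = ∑ k, c k * (A ^ (i : ℕ)) k j := by
    rw [hpow i n]; exact hlast _ j
  have h2 : ∀ k : Fin n, (A ^ (k : ℕ)) i j = (A ^ (i : ℕ)) k j := by
    intro k
    have e1 := congrFun (hpow i (k : ℕ)) j
    have e2 := congrFun (hpow k (i : ℕ)) j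
    rw [e1, e2, pow_mul_comm]
  rw [h1]
  simp only [Matrix.sum_apply, Matrix.smul_apply, smul_eq_mul]
  exact Finset.sum_congr rfl fun k _ => by rw [h2 k]

/-- Cayley–Hamilton form of the duality: the Maurer–Cartan matrix `R = W' * W⁻¹`
satisfies `R^n = ∑ p_i • R^(n-i)` (here `p i` corresponds to `p_{i+1}` in one-based
notation). -/
theorem maurerCartan_cayleyHamilton (n : ℕ) (hn : 1 ≤ n)
    (I : Set ℝ) (hI : IsOpen I)
    (a : Fin n → ℝ → ℝ) (ha : ∀ j, ContDiffOn ℝ (n : ℕ∞) (a j) I)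
    (p : Fin n → ℝ → ℝ)
    (hODE : ∀ j, ∀ x ∈ I,
      iteratedDeriv n (a j) x = ∑ i : Fin n, p i x * iteratedDeriv (n - 1 - (i : ℕ)) (a j) x)
    (x : ℝ) (hx : x ∈ I) (hdet : (wronskianMatrix n a x).det ≠ 0) :
    (wronskianMatrixDeriv n a x * (wronskianMatrix n a x)⁻¹) ^ n =
      ∑ i : Fin n, p i x •
        (wronskianMatrixDeriv n a x * (wronskianMatrix n a x)⁻¹) ^ (n - 1 - (i : ℕ)) := by
  set c : Fin n → ℝ := fun j => p j.rev x with hc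
  have hvalrev : ∀ k : Fin n, ((k.rev : Fin n) : ℕ) = n - 1 - (k : ℕ) := by
    intro k
    rw [Fin.val_rev]
    omega
  have hW' : wronskianMatrixDeriv n a x = companionA c * wronskianMatrix n a x := by
    ext i j
    have hentry : wronskianMatrixDeriv n a x i j = iteratedDeriv ((i : ℕ) + 1) (a j) x := by
      simp only [wronskianMatrixDeriv, wronskianMatrix, Matrix.of_apply, iteratedDeriv_succ]
    by_cases h : (i : ℕ) + 1 < n
    · rw [hentry, companionA_mul_row_lt c _ i h]
      simp [wronskianMatrix]
    · have h' : (i : ℕ) + 1 = n := le_antisymm i.isLt (not_lt.1 h)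
      rw [hentry, h', companionA_mul_row_last c _ i h', hODE j x hx]
      refine Fintype.sum_equiv Fin.revPerm _ _ fun k => ?_
      simp only [wronskianMatrix, Matrix.of_apply, hc, Fin.revPerm_apply, Fin.rev_rev,
        hvalrev k]
  have hWinv : wronskianMatrix n a x * (wronskianMatrix n a x)⁻¹ = 1 :=
    mul_nonsing_inv _ (isUnit_iff_ne_zero.mpr hdet)
  have hR : wronskianMatrixDeriv n a x * (wronskianMatrix n a x)⁻¹ = companionA c := by
    rw [hW', mul_assoc, hWinv, mul_one]
  rw [hR, companionA_cayleyHamilton hn c]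
  refine Fintype.sum_equiv Fin.revPerm _ _ fun k => ?_
  have hk : n - 1 - ((k.rev : Fin n) : ℕ) = (k : ℕ) := by
    rw [Fin.val_rev]
    have := k.isLt
    omega
  simp only [hc, Fin.revPerm_apply, Fin.rev_rev, hk]
end

section
/- Abel's identity. Let n ≥ 1, let a : Fin n → ℝ → ℝ be n-times continuously differentiable on an open set I ⊆ ℝ, and let p_1, …, p_n : ℝ → ℝ satisfy, for all j and all x ∈ I, (d/dx)^n a_j(x) = ∑_{i=1}^{n} p_i(x) · (d/dx)^{n−i} a_j(x). Then the Wronskian determinant w(x) = det W(x) satisfies, for every x ∈ I, the first-order differential equation deriv w (x) = p_1(x) · w(x). -/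
/-!
The determinant is multilinear in the rows, so the derivative of `t ↦ det W(t)` is the sum of the
determinants obtained by differentiating one row at a time. Differentiating row `i` of the
Wronskian gives row `i + 1`, so every such determinant but the last has two equal rows. In the
last one the new row is, by the differential equation, `∑ᵢ pᵢ · (row n - i)`, and by
multilinearity only the term with the replaced row itself survives, namely `p₁ · det W`.
-/

open Matrix

theorem hasDerivAt_det {𝕜 ι : Type*} [NontriviallyNormedField 𝕜] [Fintype ι]
    [DecidableEq ι] {A : 𝕜 → Matrix ι ι 𝕜} {A' : Matrix ι ι 𝕜} {x : 𝕜}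
    (h : ∀ i j, HasDerivAt (fun t => A t i j) (A' i j) x) :
    HasDerivAt (fun t => (A t).det) (∑ i, ((A x).updateRow i (A' i)).det) x := by
  let det : (ι → 𝕜) [⋀^ι]→L[𝕜] 𝕜 :=
    { detRowAlternating with cont := continuous_id.matrix_det }
  have hA : HasDerivAt (F := ι → ι → 𝕜) A A' x :=
    hasDerivAt_pi.2 fun i => hasDerivAt_pi.2 (h i)
  refine ((det.hasFDerivAt (A x)).comp_hasDerivAt x hA).congr_deriv ?_
  exact ContinuousMultilinearMap.linearDeriv_apply _ _ _

theorem hasDerivAt_iteratedDeriv_of_contDiffOn {𝕜 F : Type*} [NontriviallyNormedField 𝕜]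
    [NormedAddCommGroup F] [NormedSpace 𝕜 F] {n m : ℕ} {f : 𝕜 → F} {I : Set 𝕜}
    (hI : IsOpen I) (hf : ContDiffOn 𝕜 n f I) (hm : m < n) {x : 𝕜} (hx : x ∈ I) :
    HasDerivAt (iteratedDeriv m f) (iteratedDeriv (m + 1) f x) x := by
  have hwithin : DifferentiableAt 𝕜 (iteratedDerivWithin m f I) x :=
    (hf.differentiableOn_iteratedDerivWithin (by exact_mod_cast hm) hI.uniqueDiffOn x hx
      ).differentiableAt (hI.mem_nhds hx)
  have hdiff : DifferentiableAt 𝕜 (iteratedDeriv m f) x :=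
    hwithin.congr_of_eventuallyEq
      ((iteratedDerivWithin_of_isOpen hI).eventuallyEq_of_mem (hI.mem_nhds hx)).symm
  rw [iteratedDeriv_succ]
  exact hdiff.hasDerivAt

theorem hasDerivAt_det_wronskianMatrix {n : ℕ} {a : Fin (n + 1) → ℝ → ℝ} {x : ℝ}
    (h : ∀ j, ∀ m ≤ n, HasDerivAt (iteratedDeriv m (a j)) (iteratedDeriv (m + 1) (a j) x) x) :
    HasDerivAt (fun t => (wronskianMatrix (n + 1) a t).det)
      ((wronskianMatrix (n + 1) a x).updateRow (Fin.last n)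
        fun j => iteratedDeriv (n + 1) (a j) x).det x := by
  have hW := hasDerivAt_det (A := wronskianMatrix (n + 1) a)
    (A' := of fun (i : Fin (n + 1)) j => iteratedDeriv (i + 1) (a j) x)
    fun i j => h j i i.is_le
  refine hW.congr_deriv ?_
  rw [Fin.sum_univ_castSucc, Finset.sum_eq_zero, zero_add]
  · rfl
  intro i _
  exact det_updateRow_eq_zero (M := wronskianMatrix (n + 1) a x)
    (Fin.castSucc_lt_succ (i := i)).ne'

/-- Abel's identity: the Wronskian determinant `w = det W` satisfies
`w' = p₁ * w` on `I` (here `p ⟨0, _⟩` is the coefficient `p₁`). -/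
theorem abel_identity (n : ℕ) (hn : 1 ≤ n)
    (I : Set ℝ) (hI : IsOpen I)
    (a : Fin n → ℝ → ℝ) (ha : ∀ j, ContDiffOn ℝ (n : ℕ∞) (a j) I)
    (p : Fin n → ℝ → ℝ)
    (hODE : ∀ j, ∀ x ∈ I,
      iteratedDeriv n (a j) x = ∑ i : Fin n, p i x * iteratedDeriv (n - 1 - (i : ℕ)) (a j) x)
    (x : ℝ) (hx : x ∈ I) :
    deriv (fun t => (wronskianMatrix n a t).det) x =
      p ⟨0, hn⟩ x * (wronskianMatrix n a x).det := by
  obtain ⟨n, rfl⟩ : ∃ k, n = k + 1 := ⟨n - 1, by omega⟩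
  have hderiv := hasDerivAt_det_wronskianMatrix fun j m hm =>
    hasDerivAt_iteratedDeriv_of_contDiffOn hI (ha j) (by omega) hx
  have hlast : (fun j => iteratedDeriv (n + 1) (a j) x) =
      ∑ i, p i.rev x • wronskianMatrix (n + 1) a x i := by
    funext j
    rw [hODE j x hx, Finset.sum_apply]
    refine Fintype.sum_equiv Fin.revPerm _ _ fun i => ?_
    simp [wronskianMatrix, Fin.val_rev]
  rw [hderiv.deriv, hlast, det_updateRow_sum, Fin.rev_last]
  rfl
end

section
/- Let n ≥ 1, let a : Fin n → ℝ → ℝ be n-times continuously differentiable on an open set I ⊆ ℝ, and let p_1, …, p_n : ℝ → ℝ satisfy, for all j and all x ∈ I, (d/dx)^n a_j(x) = ∑_{i=1}^{n} p_i(x) · (d/dx)^{n−i} a_j(x). Then for every x ∈ I with det W(x) ≠ 0, the trace of the Maurer–Cartan matrix equals the leading ODE coefficient: trace(W'(x) · (W(x))⁻¹) = p_1(x). -/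
open Matrix

/-- The trace of the Maurer–Cartan matrix `R = W' * W⁻¹` equals the leading ODE
coefficient `p₁` (here `p ⟨0, _⟩`). -/
theorem trace_maurerCartan (n : ℕ) (hn : 1 ≤ n)
    (I : Set ℝ) (hI : IsOpen I)
    (a : Fin n → ℝ → ℝ) (ha : ∀ j, ContDiffOn ℝ (n : ℕ∞) (a j) I)
    (p : Fin n → ℝ → ℝ)
    (hODE : ∀ j, ∀ x ∈ I,
      iteratedDeriv n (a j) x = ∑ i : Fin n, p i x * iteratedDeriv (n - 1 - (i : ℕ)) (a j) x)
    (x : ℝ) (hx : x ∈ I) (hdet : (wronskianMatrix n a x).det ≠ 0) :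
    (wronskianMatrixDeriv n a x * (wronskianMatrix n a x)⁻¹).trace = p ⟨0, hn⟩ x := by
  set W := wronskianMatrix n a x with hW
  -- the companion matrix
  set C : Matrix (Fin n) (Fin n) ℝ := Matrix.of fun i k =>
    if h : (i : ℕ) + 1 < n then (if (k : ℕ) = (i : ℕ) + 1 then 1 else 0)
    else p (Fin.rev k) x with hC
  have key : wronskianMatrixDeriv n a x = C * W := by
    ext i j
    have hderiv : wronskianMatrixDeriv n a x i j = iteratedDeriv ((i : ℕ) + 1) (a j) x := by
      simp [wronskianMatrixDeriv, wronskianMatrix, iteratedDeriv_succ]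
    rw [hderiv, Matrix.mul_apply]
    by_cases h : (i : ℕ) + 1 < n
    · rw [Finset.sum_eq_single (⟨(i : ℕ) + 1, h⟩ : Fin n)]
      · simp [hC, hW, wronskianMatrix, h]
      · intro b _ hb
        have : (b : ℕ) ≠ (i : ℕ) + 1 := fun hh => hb (Fin.ext hh)
        simp [hC, h, this]
      · simp
    · have hi : (i : ℕ) = n - 1 := by omega
      have hn' : (i : ℕ) + 1 = n := by omega
      rw [hn', hODE j x hx]
      rw [show (∑ i : Fin n, p i x * iteratedDeriv (n - 1 - (i : ℕ)) (a j) x)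
          = ∑ k : Fin n, p (Fin.rev k) x * iteratedDeriv (n - 1 - ((Fin.rev k : Fin n) : ℕ)) (a j) x
         from (Fintype.sum_bijective Fin.rev Fin.rev_bijective _ _ (fun k => rfl)).symm]
      apply Finset.sum_congr rfl
      intro k _
      have hk : n - 1 - ((Fin.rev k : Fin n) : ℕ) = (k : ℕ) := by
        have := k.isLt
        simp [Fin.rev]
        omega
      have hlt := k.isLt
      simp [hC, hW, wronskianMatrix, h, hk]
      exact Or.inl (by congr 1 <;> omega)
  rw [key, Matrix.mul_assoc, Matrix.mul_nonsing_inv _ (isUnit_iff_ne_zero.mpr hdet),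
    Matrix.mul_one, Matrix.trace]
  rw [Finset.sum_eq_single (⟨n - 1, by omega⟩ : Fin n)]
  · have h : ¬ ((n - 1) + 1 < n) := by omega
    have hrev : Fin.rev (⟨n - 1, by omega⟩ : Fin n) = ⟨0, hn⟩ := by
      ext; simp [Fin.rev]; omega
    simp [hC, Matrix.diag, h, hrev]
  · intro b _ hb
    have h : (b : ℕ) + 1 < n := by
      have := b.isLt
      have : (b : ℕ) ≠ n - 1 := fun hh => hb (Fin.ext (by simpa using hh))
      omega
    simp [hC, Matrix.diag, h]
  · simp
end

section
/- Let n ≥ 1, let a : Fin n → ℝ → ℝ be n-times continuously differentiable on an open set I ⊆ ℝ, and let p_1, …, p_n : ℝ → ℝ satisfy, for all j and all x ∈ I, (d/dx)^n a_j(x) = ∑_{i=1}^{n} p_i(x) · (d/dx)^{n−i} a_j(x). Then for every x ∈ I with det W(x) ≠ 0, the determinant of the Maurer–Cartan matrix equals, up to sign, the last ODE coefficient: det(W'(x) · (W(x))⁻¹) = (−1)^{n−1} · p_n(x). -/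
open Matrix

/-!
Differentiating the Wronskian row by row shifts each row up by one, and the ODE expresses the
derivative of the last row as a combination of the rows. Hence `W' = C * W` with `C` the companion
matrix of the ODE, so `W' * W⁻¹ = C`, and expanding `det C` along its first column leaves only
`(-1)^(n-1) * pₙ`.
-/

def companionMatrix {R : Type*} [Zero R] [One R] {m : ℕ} (c : Fin (m + 1) → R) :
    Matrix (Fin (m + 1)) (Fin (m + 1)) R :=
  of fun i k => if i = Fin.last m then c k else if (k : ℕ) = i + 1 then 1 else 0

section companionMatrix

variable {R : Type*} {m : ℕ}

theorem companionMatrix_mul_apply_last [NonAssocSemiring R] {o : Type*}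
    (c : Fin (m + 1) → R) (M : Matrix (Fin (m + 1)) o R) (j : o) :
    (companionMatrix c * M) (Fin.last m) j = ∑ k, c k * M k j := by
  simp [companionMatrix, mul_apply]

theorem companionMatrix_mul_apply_castSucc [NonAssocSemiring R] {o : Type*}
    (c : Fin (m + 1) → R) (M : Matrix (Fin (m + 1)) o R) (i : Fin m) (j : o) :
    (companionMatrix c * M) i.castSucc j = M i.succ j := by
  have hshift (k : Fin (m + 1)) : ((k : ℕ) = i + 1) ↔ k = i.succ := by
    simp [Fin.ext_iff]
  simp [companionMatrix, mul_apply, Fin.castSucc_ne_last, hshift]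

theorem companionMatrix_submatrix_last_succ [Zero R] [One R] (c : Fin (m + 1) → R) :
    (companionMatrix c).submatrix (Fin.last m).succAbove Fin.succ = 1 := by
  ext i j
  have hi : (i : ℕ) ≠ m := i.is_lt.ne
  simp [companionMatrix, one_apply, Fin.ext_iff, hi, @eq_comm _ (j : ℕ)]

theorem det_companionMatrix [CommRing R] (c : Fin (m + 1) → R) :
    (companionMatrix c).det = (-1) ^ m * c 0 := by
  have hcol (i : Fin (m + 1)) (hi : i ≠ Fin.last m) : companionMatrix c i 0 = 0 := by
    simp [companionMatrix, hi]
  rw [det_succ_column_zero, Finset.sum_eq_single (Fin.last m) (fun i _ hi => by simp [hcol i hi])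
    (by simp), companionMatrix_submatrix_last_succ, det_one]
  simp [companionMatrix]

end companionMatrix

theorem wronskianMatrixDeriv_apply (n : ℕ) (a : Fin n → ℝ → ℝ) (x : ℝ) (i j : Fin n) :
    wronskianMatrixDeriv n a x i j = iteratedDeriv (i + 1) (a j) x := by
  simp [wronskianMatrixDeriv, wronskianMatrix, iteratedDeriv_succ]

theorem wronskianMatrixDeriv_eq_companionMatrix_mul {m : ℕ} (a p : Fin (m + 1) → ℝ → ℝ) (x : ℝ)
    (hODE : ∀ j, iteratedDeriv (m + 1) (a j) x =
      ∑ i : Fin (m + 1), p i x * iteratedDeriv (m - i) (a j) x) :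
    wronskianMatrixDeriv (m + 1) a x =
      companionMatrix (fun k => p k.rev x) * wronskianMatrix (m + 1) a x := by
  ext i j
  rw [wronskianMatrixDeriv_apply]
  induction i using Fin.lastCases with
  | last =>
    rw [companionMatrix_mul_apply_last, Fin.val_last, hODE j, ← Equiv.sum_comp Fin.revPerm]
    refine Finset.sum_congr rfl fun k _ => ?_
    rw [Fin.revPerm_apply, Fin.val_rev, Nat.add_sub_add_right, Nat.sub_sub_self k.is_le]
    rfl
  | cast i =>
    rw [companionMatrix_mul_apply_castSucc]
    simp [wronskianMatrix]

/-- The determinant of the Maurer–Cartan matrix `R = W' * W⁻¹` equals, up to sign,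
the last ODE coefficient: `det R = (-1)^(n-1) * pₙ` (here `p ⟨n-1, _⟩` is `pₙ`). -/
theorem det_maurerCartan (n : ℕ) (hn : 1 ≤ n)
    (I : Set ℝ)
    (a : Fin n → ℝ → ℝ)
    (p : Fin n → ℝ → ℝ)
    (hODE : ∀ j, ∀ x ∈ I,
      iteratedDeriv n (a j) x = ∑ i : Fin n, p i x * iteratedDeriv (n - 1 - (i : ℕ)) (a j) x)
    (x : ℝ) (hx : x ∈ I) (hdet : (wronskianMatrix n a x).det ≠ 0) :
    (wronskianMatrixDeriv n a x * (wronskianMatrix n a x)⁻¹).det =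
      (-1 : ℝ) ^ (n - 1) * p ⟨n - 1, by omega⟩ x := by
  obtain ⟨m, rfl⟩ : ∃ m, n = m + 1 := ⟨n - 1, by omega⟩
  rw [wronskianMatrixDeriv_eq_companionMatrix_mul a p x (fun j => hODE j x hx), Matrix.mul_assoc,
    mul_nonsing_inv _ (isUnit_iff_ne_zero.mpr hdet), Matrix.mul_one, det_companionMatrix, Fin.rev_zero]
  rfl
end

section
/- Existence of the ODE. Let n ≥ 1 and let a : Fin n → ℝ → ℝ be n-times continuously differentiable on an open set I ⊆ ℝ with det W(x) ≠ 0 for all x ∈ I. Then there exist functions p_1, …, p_n : ℝ → ℝ such that for all j and all x ∈ I, (d/dx)^n a_j(x) = ∑_{i=1}^{n} p_i(x) · (d/dx)^{n−i} a_j(x); that is, the functions a_1, …, a_n satisfy a common linear homogeneous differential equation of order n. -/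
open Matrix

/-- Existence of the ODE: if the Wronskian determinant is nonvanishing on `I`, then
the functions `a j` satisfy a common linear homogeneous ODE of order `n` on `I`. -/
theorem exists_ode (n : ℕ) (hn : 1 ≤ n)
    (I : Set ℝ) (hI : IsOpen I)
    (a : Fin n → ℝ → ℝ) (ha : ∀ j, ContDiffOn ℝ (n : ℕ∞) (a j) I)
    (hdet : ∀ x ∈ I, (wronskianMatrix n a x).det ≠ 0) :
    ∃ p : Fin n → ℝ → ℝ, ∀ j, ∀ x ∈ I,
      iteratedDeriv n (a j) x =
        ∑ i : Fin n, p i x * iteratedDeriv (n - 1 - (i : ℕ)) (a j) x := by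
  -- the Wronskian with rows reversed
  set M : ℝ → Matrix (Fin n) (Fin n) ℝ :=
    fun x => (wronskianMatrix n a x).submatrix Fin.rev id with hM
  classical
  have hMdet : ∀ x ∈ I, (M x).det ≠ 0 := by
    intro x hx
    have h1 : ((wronskianMatrix n a x).submatrix (⇑(Fin.revPerm (n := n))) id).det =
        ((Equiv.Perm.sign (Fin.revPerm (n := n)) : ℤ) : ℝ) * (wronskianMatrix n a x).det :=
      Matrix.det_permute (Fin.revPerm) (wronskianMatrix n a x)
    have h2 : (M x).det = ((Equiv.Perm.sign (Fin.revPerm (n := n)) : ℤ) : ℝ) *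
        (wronskianMatrix n a x).det := h1
    rw [h2]
    rcases Int.units_eq_one_or (Equiv.Perm.sign (Fin.revPerm (n := n))) with h | h <;>
      simp [h, hdet x hx]
  -- right-hand side vector
  set b : ℝ → Fin n → ℝ := fun x j => iteratedDeriv n (a j) x with hb
  refine ⟨fun i x => if x ∈ I then (b x ᵥ* (M x)⁻¹) i else 0, fun j x hx => ?_⟩
  have key : (b x ᵥ* (M x)⁻¹) ᵥ* M x = b x := by
    rw [Matrix.vecMul_vecMul, Matrix.nonsing_inv_mul _ (isUnit_iff_ne_zero.2 (hMdet x hx)),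
      Matrix.vecMul_one]
  have hkey := congrFun key j
  simp only [Matrix.vecMul, dotProduct] at hkey
  calc iteratedDeriv n (a j) x = b x j := rfl
    _ = ∑ i, (b x ᵥ* (M x)⁻¹) i * M x i j := hkey.symm
    _ = _ := by
        refine Finset.sum_congr rfl fun i _ => ?_
        have hrev : ((Fin.rev i : Fin n) : ℕ) = n - 1 - (i : ℕ) := by
          simp [Fin.rev]; omega
        have hMij : M x i j = iteratedDeriv (n - 1 - (i : ℕ)) (a j) x := by
          rw [hM]; simp only [Matrix.submatrix_apply, id_eq, wronskianMatrix, Matrix.of_apply, hrev]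
        rw [hMij]; simp only [if_pos hx]
end
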